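/- arXiv:1912.01467 — 2 statements merged into one kernel-verified Lean document; each statement's English description precedes it below -/
import Mathlib

section
/- Let f be convex and differentiable on the space of n×n real symmetric matrices, let S_n be the spectrahedron, and let X* be an optimal solution of min_{X∈S_n} f(X) such that δ := λ_{n-1}(∇f(X*)) − λ_n(∇f(X*)) > 0. Then X* is the unique optimal solution and X* = x*x*ᵀ where x* is a unit eigenvector of ∇f(X*) corresponding to the smallest eigenvalue λ_n(∇f(X*)). -/
open Matrix
open scoped RealInnerProductSpace

noncomputable section

/-- Trace (Frobenius) inner product on real square matrices. -/
def tinner {n : ℕ} (A B : Matrix (Fin n) (Fin n) ℝ) : ℝ := ∑ i, ∑ j, A i j * B i j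

/-- Squared Frobenius norm. -/
def frobSq {n : ℕ} (A : Matrix (Fin n) (Fin n) ℝ) : ℝ := ∑ i, ∑ j, (A i j)^2

/-- Frobenius norm. -/
def frobNorm {n : ℕ} (A : Matrix (Fin n) (Fin n) ℝ) : ℝ := Real.sqrt (frobSq A)

/-- The spectrahedron: positive semidefinite matrices with unit trace. -/
def Spectra (n : ℕ) : Set (Matrix (Fin n) (Fin n) ℝ) :=
  {X | X.PosSemidef ∧ X.trace = 1}

/-- Eigenvalues of a symmetric matrix sorted in non-decreasing order, so that
`sortedEigs hA 0` is the smallest eigenvalue (λ_n in the paper's non-increasing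
convention), `sortedEigs hA 1` is the second smallest (λ_{n-1}), and in general
`sortedEigs hA i = λ_{n-i}`. -/
def sortedEigs {n : ℕ} {A : Matrix (Fin n) (Fin n) ℝ} (hA : A.IsHermitian) : Fin n → ℝ :=
  hA.eigenvalues ∘ Tuple.sort hA.eigenvalues

/-! ### Auxiliary lemmas -/

lemma tinner_sub {m : ℕ} (A B C : Matrix (Fin m) (Fin m) ℝ) :
    tinner A (B - C) = tinner A B - tinner A C := by
  simp [tinner, mul_sub, Finset.sum_sub_distrib]

lemma deriv_nonneg_of_min {g : ℝ → ℝ} {L : ℝ} (h : HasDerivAt g L 0)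
    (hmin : ∀ t ∈ Set.Ioo (0:ℝ) 1, g 0 ≤ g t) : 0 ≤ L := by
  rw [hasDerivAt_iff_tendsto_slope] at h
  have h' : Filter.Tendsto (slope g 0) (nhdsWithin 0 (Set.Ioi 0)) (nhds L) :=
    h.mono_left (nhdsWithin_mono _ (fun t ht => ne_of_gt ht))
  refine ge_of_tendsto h' ?_
  filter_upwards [Ioo_mem_nhdsGT_of_mem (Set.mem_Ico.mpr ⟨le_refl (0:ℝ), one_pos⟩)] with t ht
  rw [slope_def_field]
  have := hmin t ht
  have ht0 : (0:ℝ) < t := ht.1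
  apply div_nonneg <;> [linarith; linarith]

lemma deriv_nonpos_of_le {g : ℝ → ℝ} {L : ℝ} (h : HasDerivAt g L 0)
    (hle : ∀ t ∈ Set.Ioo (0:ℝ) 1, g t ≤ g 0) : L ≤ 0 := by
  rw [hasDerivAt_iff_tendsto_slope] at h
  have h' : Filter.Tendsto (slope g 0) (nhdsWithin 0 (Set.Ioi 0)) (nhds L) :=
    h.mono_left (nhdsWithin_mono _ (fun t ht => ne_of_gt ht))
  refine le_of_tendsto h' ?_
  filter_upwards [Ioo_mem_nhdsGT_of_mem (Set.mem_Ico.mpr ⟨le_refl (0:ℝ), one_pos⟩)] with t ht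
  rw [slope_def_field]
  have := hle t ht
  have ht0 : (0:ℝ) < t := ht.1
  apply div_nonpos_of_nonpos_of_nonneg <;> [linarith; linarith]

lemma spectra_convex {m : ℕ} {X Y : Matrix (Fin m) (Fin m) ℝ} (hX : X ∈ Spectra m)
    (hY : Y ∈ Spectra m) {t : ℝ} (ht0 : 0 ≤ t) (ht1 : t ≤ 1) :
    (1 - t) • X + t • Y ∈ Spectra m := by
  obtain ⟨hX1, hX2⟩ := hX
  obtain ⟨hY1, hY2⟩ := hY
  refine ⟨posSemidef_iff_dotProduct_mulVec.mpr ⟨?_, ?_⟩, ?_⟩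
  · show _ = _
    rw [conjTranspose_add, conjTranspose_smul, conjTranspose_smul, hX1.1, hY1.1]
    simp
  · intro y
    rw [add_mulVec, smul_mulVec, smul_mulVec, dotProduct_add,
      dotProduct_smul, dotProduct_smul]
    have q1 := hX1.dotProduct_mulVec_nonneg y
    have q2 := hY1.dotProduct_mulVec_nonneg y
    have : (0:ℝ) ≤ 1 - t := by linarith
    exact add_nonneg (smul_nonneg this q1) (smul_nonneg ht0 q2)
  · rw [trace_add, trace_smul, trace_smul, hX2, hY2]
    simp

/-- Core lemma: any element of the spectrahedron whose inner product with `G` is at most the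
smallest eigenvalue of `G` equals the rank-one projector on the bottom eigenvector,
provided the bottom eigenvalue is simple. -/
lemma core {m : ℕ} {G X : Matrix (Fin (m+2)) (Fin (m+2)) ℝ} (hG : G.IsHermitian)
    (hgap : 0 < sortedEigs hG 1 - sortedEigs hG 0)
    (hX : X ∈ Spectra (m+2)) (hle : tinner G X ≤ sortedEigs hG 0) :
    X = vecMulVec (⇑(hG.eigenvectorBasis (Tuple.sort hG.eigenvalues 0)))
      (⇑(hG.eigenvectorBasis (Tuple.sort hG.eigenvalues 0))) := by
  classical
  set σ := Tuple.sort hG.eigenvalues with hσ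
  set i₀ := σ 0 with hi₀
  set U : Matrix (Fin (m+2)) (Fin (m+2)) ℝ := (hG.eigenvectorUnitary : Matrix (Fin (m+2)) (Fin (m+2)) ℝ) with hU
  have hU1 : star U * U = 1 := Matrix.UnitaryGroup.star_mul_self _
  have hU2 : U * star U = 1 := Matrix.mem_unitaryGroup_iff.mp hG.eigenvectorUnitary.2
  set M : Matrix (Fin (m+2)) (Fin (m+2)) ℝ := star U * X * U with hM
  have hXM : X = U * M * star U := by
    rw [hM]
    simp only [Matrix.mul_assoc, hU2, Matrix.mul_one]
    rw [← Matrix.mul_assoc, hU2, Matrix.one_mul]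
  have hMpsd : M.PosSemidef := by
    have := hX.1.conjTranspose_mul_mul_same U
    rwa [← Matrix.star_eq_conjTranspose] at this
  have htrM : M.trace = 1 := by
    rw [hM, Matrix.trace_mul_cycle, hU2, Matrix.one_mul, hX.2]
  have hdiagG : star U * G * U = Matrix.diagonal hG.eigenvalues :=
    by simpa [Unitary.conjStarAlgAut_apply] using hG.conjStarAlgAut_star_eigenvectorUnitary
  have htinner : tinner G X = ∑ i, hG.eigenvalues i * M i i := by
    have hXsymm : ∀ i j, X i j = X j i := by
      intro i j
      have := hX.1.isHermitian.apply i j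
      simpa using this.symm
    have h1 : tinner G X = (G * X).trace := by
      unfold tinner
      rw [Matrix.trace]
      simp only [Matrix.diag, Matrix.mul_apply]
      exact Finset.sum_congr rfl fun i _ => Finset.sum_congr rfl fun j _ => by rw [hXsymm i j]
    rw [h1, hXM]
    have h2 : G * (U * M * star U) = (G * U * M) * star U := by noncomm_ring
    rw [h2, Matrix.trace_mul_comm]
    have h3 : star U * (G * U * M) = (star U * G * U) * M := by noncomm_ring
    rw [h3, hdiagG]
    rw [Matrix.trace]
    simp [Matrix.diag, Matrix.mul_apply, Matrix.diagonal, ite_mul]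
  have hmin' : ∀ i, sortedEigs hG 0 ≤ hG.eigenvalues i := by
    intro i
    have : hG.eigenvalues i = (hG.eigenvalues ∘ σ) (σ.symm i) := by simp
    rw [this]
    exact Tuple.monotone_sort hG.eigenvalues (Fin.zero_le _)
  have hstrict : ∀ i, i ≠ i₀ → sortedEigs hG 1 ≤ hG.eigenvalues i := by
    intro i hi
    have h1 : hG.eigenvalues i = (hG.eigenvalues ∘ σ) (σ.symm i) := by simp
    rw [h1]
    apply Tuple.monotone_sort hG.eigenvalues
    have : σ.symm i ≠ 0 := by
      intro h
      apply hi
      rw [hi₀, ← h]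
      simp
    have h0 : (σ.symm i).val ≠ 0 := fun h => this (Fin.ext (by simpa using h))
    rw [Fin.le_def]
    have h1 : ((1 : Fin (m+2)) : ℕ) = 1 := rfl
    omega
  have hdnn : ∀ i, 0 ≤ M i i := by
    intro i
    have := hMpsd.dotProduct_mulVec_nonneg (Pi.single i 1)
    simpa [dotProduct, mulVec_single, Pi.single_apply] using this
  have hsum0 : ∑ i, (hG.eigenvalues i - sortedEigs hG 0) * M i i = 0 := by
    have hsum_le : ∑ i, (hG.eigenvalues i - sortedEigs hG 0) * M i i ≤ 0 := by
      have : ∑ i, (hG.eigenvalues i - sortedEigs hG 0) * M i i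
          = (∑ i, hG.eigenvalues i * M i i) - sortedEigs hG 0 * ∑ i, M i i := by
        rw [Finset.mul_sum, ← Finset.sum_sub_distrib]
        congr 1; ext i; ring
      rw [this, ← htinner]
      have htr' : ∑ i, M i i = 1 := htrM
      rw [htr', mul_one]
      linarith
    have hnn : ∀ i ∈ Finset.univ, 0 ≤ (hG.eigenvalues i - sortedEigs hG 0) * M i i :=
      fun i _ => mul_nonneg (by linarith [hmin' i]) (hdnn i)
    linarith [Finset.sum_nonneg hnn]
  have hMzero : ∀ i, i ≠ i₀ → M i i = 0 := by
    intro i hi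
    have := (Finset.sum_eq_zero_iff_of_nonneg
      (fun i _ => mul_nonneg (by linarith [hmin' i]) (hdnn i))).mp hsum0 i (Finset.mem_univ i)
    rcases mul_eq_zero.mp this with h | h
    · exfalso; have := hstrict i hi; linarith
    · exact h
  have hMi0 : M i₀ i₀ = 1 := by
    have : ∑ i, M i i = 1 := htrM
    rw [← this, Finset.sum_eq_single i₀]
    · intro b _ hb; exact hMzero b hb
    · intro h; exact absurd (Finset.mem_univ i₀) h
  have hMentry : ∀ i j, i ≠ i₀ → M i j = 0 ∧ M j i = 0 := by
    intro i j hi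
    have hcol : M *ᵥ Pi.single i 1 = 0 := by
      rw [← hMpsd.dotProduct_mulVec_zero_iff]
      simp [mulVec_single, dotProduct, Pi.single_apply, hMzero i hi]
    have hji : M j i = 0 := by
      have := congrFun hcol j
      simpa [mulVec_single] using this
    have hij : M i j = 0 := by
      have : M i j = M j i := by
        have := hMpsd.isHermitian.apply i j
        simpa using this.symm
      rw [this, hji]
    exact ⟨hij, hji⟩
  have hMeq : M = vecMulVec (Pi.single i₀ 1) (Pi.single i₀ 1) := by
    ext i j
    rw [vecMulVec_apply]
    by_cases hi : i = i₀
    · by_cases hj : j = i₀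
      · subst hi; subst hj; simp [hMi0]
      · subst hi
        rw [(hMentry j i₀ hj).2]
        simp [Pi.single_apply, hj]
    · rw [(hMentry i j hi).1]
      simp [Pi.single_apply, hi]
  have hxU : ∀ a, (⇑(hG.eigenvectorBasis i₀) : Fin (m+2) → ℝ) a = U a i₀ := by
    intro a
    rw [hU]
    exact (Matrix.IsHermitian.eigenvectorUnitary_apply hG a i₀).symm
  rw [hXM, hMeq]
  ext a b
  rw [vecMulVec_apply, hxU, hxU]
  simp [Matrix.mul_apply, vecMulVec_apply, Pi.single_apply, Matrix.star_apply,
    Finset.sum_ite_eq', ite_mul, mul_ite, Finset.mul_sum]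

/-- If `f` is convex and differentiable (with gradient `Gf`), `Xs` minimizes `f`
over the spectrahedron, and the gradient at `Xs` has a positive gap between its two smallest
eigenvalues, then `Xs` is the unique minimizer and `Xs = x xᵀ` for a unit eigenvector `x`
of `∇f(Xs)` for the smallest eigenvalue. -/
theorem stmt0 {n : ℕ} (f : Matrix (Fin (n+2)) (Fin (n+2)) ℝ → ℝ)
    (Gf : Matrix (Fin (n+2)) (Fin (n+2)) ℝ → Matrix (Fin (n+2)) (Fin (n+2)) ℝ)
    (hconv : ConvexOn ℝ Set.univ f)
    (hdiff : ∀ X H, HasDerivAt (fun t : ℝ => f (X + t • H)) (tinner (Gf X) H) 0)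
    (Xs : Matrix (Fin (n+2)) (Fin (n+2)) ℝ) (hXs : Xs ∈ Spectra (n+2))
    (hopt : ∀ X ∈ Spectra (n+2), f Xs ≤ f X)
    (hG : (Gf Xs).IsHermitian)
    (hgap : 0 < sortedEigs hG 1 - sortedEigs hG 0) :
    (∀ Y ∈ Spectra (n+2), f Y = f Xs → Y = Xs) ∧
    ∃ x : Fin (n+2) → ℝ, (∑ i, (x i)^2 = 1) ∧
      (Gf Xs) *ᵥ x = sortedEigs hG 0 • x ∧ Xs = vecMulVec x x := by
  classical
  set x : Fin (n+2) → ℝ := ⇑(hG.eigenvectorBasis (Tuple.sort hG.eigenvalues 0)) with hxdef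
  have hx2 : ∑ i, (x i)^2 = 1 := by
    have hnorm : ‖hG.eigenvectorBasis (Tuple.sort hG.eigenvalues 0)‖ = 1 :=
      hG.eigenvectorBasis.orthonormal.1 _
    have hinner : (inner ℝ (hG.eigenvectorBasis (Tuple.sort hG.eigenvalues 0))
        (hG.eigenvectorBasis (Tuple.sort hG.eigenvalues 0)) : ℝ) = 1 := by
      rw [real_inner_self_eq_norm_mul_norm, hnorm]; norm_num
    rw [← hinner]
    simp only [PiLp.inner_apply, sq, hxdef, RCLike.inner_apply, conj_trivial]
  have heig : (Gf Xs) *ᵥ x = sortedEigs hG 0 • x :=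
    hG.mulVec_eigenvectorBasis (Tuple.sort hG.eigenvalues 0)
  have hxxS : vecMulVec x x ∈ Spectra (n+2) := by
    refine ⟨posSemidef_iff_dotProduct_mulVec.mpr ⟨?_, ?_⟩, ?_⟩
    · show _ = _
      ext i j
      simp [conjTranspose_apply, vecMulVec_apply, mul_comm]
    · intro y
      have hcalc : star y ⬝ᵥ (vecMulVec x x *ᵥ y) = (∑ i, x i * y i) * (∑ i, x i * y i) := by
        simp only [dotProduct, mulVec, vecMulVec_apply, Pi.star_apply, star_trivial]
        rw [Finset.sum_mul_sum]
        refine Finset.sum_congr rfl fun i _ => ?_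
        rw [Finset.mul_sum]
        refine Finset.sum_congr rfl fun j _ => by ring
      rw [hcalc]
      exact mul_self_nonneg _
    · simp only [Matrix.trace, Matrix.diag, vecMulVec_apply, ← sq]
      exact hx2
  have htin : tinner (Gf Xs) (vecMulVec x x) = sortedEigs hG 0 := by
    have h1 : tinner (Gf Xs) (vecMulVec x x) = ∑ i, x i * ((Gf Xs) *ᵥ x) i := by
      unfold tinner
      simp only [vecMulVec_apply, mulVec, dotProduct]
      refine Finset.sum_congr rfl fun i _ => ?_
      rw [Finset.mul_sum]
      refine Finset.sum_congr rfl fun j _ => by ring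
    rw [h1, heig]
    have : ∑ i, x i * (sortedEigs hG 0 • x) i = sortedEigs hG 0 * ∑ i, (x i)^2 := by
      rw [Finset.mul_sum]
      refine Finset.sum_congr rfl fun i _ => ?_
      simp [sq]; ring
    rw [this, hx2, mul_one]
  have hfoc : ∀ X ∈ Spectra (n+2), 0 ≤ tinner (Gf Xs) (X - Xs) := by
    intro X hXmem
    apply deriv_nonneg_of_min (hdiff Xs (X - Xs))
    intro t ht
    show f (Xs + (0:ℝ) • (X - Xs)) ≤ f (Xs + t • (X - Xs))
    rw [zero_smul, add_zero]
    have hmem : Xs + t • (X - Xs) = (1 - t) • Xs + t • X := by module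
    rw [hmem]
    exact hopt _ (spectra_convex hXs hXmem ht.1.le ht.2.le)
  have htinXs : tinner (Gf Xs) Xs ≤ sortedEigs hG 0 := by
    have h0 := hfoc (vecMulVec x x) hxxS
    rw [tinner_sub, htin] at h0
    linarith
  have hXseq : Xs = vecMulVec x x := core hG hgap hXs htinXs
  constructor
  · intro Y hY hfY
    have hL : tinner (Gf Xs) (Y - Xs) ≤ 0 := by
      apply deriv_nonpos_of_le (hdiff Xs (Y - Xs))
      intro t ht
      show f (Xs + t • (Y - Xs)) ≤ f (Xs + (0:ℝ) • (Y - Xs))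
      rw [zero_smul, add_zero]
      have hmem : Xs + t • (Y - Xs) = (1 - t) • Xs + t • Y := by module
      rw [hmem]
      have hcx := hconv.2 (Set.mem_univ Xs) (Set.mem_univ Y)
        (by linarith [ht.2] : (0:ℝ) ≤ 1 - t) ht.1.le (by ring)
      rw [hfY] at hcx
      simp only [smul_eq_mul] at hcx
      linarith
    have hYtin : tinner (Gf Xs) Y ≤ sortedEigs hG 0 := by
      rw [tinner_sub] at hL
      linarith
    rw [core hG hgap hY hYtin]
    exact hXseq.symm
  · exact ⟨x, hx2, heig, hXseq⟩
end
end

section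
/- Let f be convex and differentiable on 𝕊^n, and let X* minimize f over the spectrahedron S_n with δ := λ_{n-1}(∇f(X*)) − λ_n(∇f(X*)) > 0. Then for every X ∈ S_n, ‖X − X*‖_F² ≤ (2/δ)(f(X) − f(X*)). (Quadratic growth without strong convexity.) -/
/-!
Write `G = ∇f(X*) = U diag(λ) Uᵀ` and let `P = v vᵀ` for a unit eigenvector `v` of the smallest
eigenvalue `λ_min`. For `X` in the spectrahedron the diagonal of `Uᵀ X U` is a probability vector,
so the eigengap gives `⟨G, X⟩ ≥ λ_min + δ (1 - ⟨X, P⟩)`. On the spectrahedron `‖X‖_F ≤ tr X = 1`,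
hence `‖X - Y‖_F² ≤ 2 (1 - ⟨X, Y⟩)`. First-order optimality `⟨G, P - X*⟩ ≥ 0` together with the
eigengap bound forces `⟨X*, P⟩ = 1`, so `X* = P`. Then for any `X`, convexity gives
`f X - f X* ≥ ⟨G, X - P⟩ ≥ δ (1 - ⟨X, P⟩) ≥ (δ / 2) ‖X - P‖_F²`.
-/

open Matrix
open scoped RealInnerProductSpace

noncomputable section

open Set

section Calculus

variable {E : Type*} [AddCommGroup E] [Module ℝ E] {f : E → ℝ} {x y : E} {d : ℝ}

theorem ConvexOn.le_sub_of_hasDerivAt_line (hf : ConvexOn ℝ univ f)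
    (hd : HasDerivAt (fun t : ℝ => f (x + t • (y - x))) d 0) : d ≤ f y - f x := by
  have hline : ConvexOn ℝ univ (fun t : ℝ => f (x + t • (y - x))) := by
    simpa [Function.comp_def, AffineMap.lineMap_apply_module', add_comm]
      using hf.comp_affineMap (AffineMap.lineMap x y)
  simpa [slope_def_field]
    using hline.le_slope_of_hasDerivAt (mem_univ 0) (mem_univ 1) one_pos hd

theorem IsMinOn.nonneg_of_hasDerivAt_line {S : Set E} (hS : Convex ℝ S) (hmin : IsMinOn f S x)
    (hx : x ∈ S) (hy : y ∈ S) (hd : HasDerivAt (fun t : ℝ => f (x + t • (y - x))) d 0) :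
    0 ≤ d := by
  have hline : IsMinOn (fun t : ℝ => f (x + t • (y - x))) (Icc 0 1) 0 := fun t ht => by
    simpa using hmin (hS.add_smul_sub_mem hx hy ht)
  have hcone : (1 : ℝ) - 0 ∈ posTangentConeAt (Icc (0 : ℝ) 1) 0 :=
    sub_mem_posTangentConeAt_of_segment_subset (segment_eq_Icc zero_le_one).subset
  simpa using hline.localize.hasFDerivWithinAt_nonneg hd.hasFDerivAt.hasFDerivWithinAt hcone

end Calculus

theorem add_mul_one_sub_le_sum_mul {ι : Type*} [Fintype ι] {d y : ι → ℝ} {k : ι} {δ : ℝ}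
    (hy : ∀ i, 0 ≤ y i) (hsum : ∑ i, y i = 1) (hgap : ∀ i ≠ k, d k + δ ≤ d i) :
    d k + δ * (1 - y k) ≤ ∑ i, d i * y i := by
  classical
  have hrest : ∑ i ∈ Finset.univ.erase k, y i = 1 - y k := by
    rw [← hsum, ← Finset.add_sum_erase _ _ (Finset.mem_univ k)]
    ring
  have hle : ∑ i ∈ Finset.univ.erase k, (d k + δ) * y i ≤ ∑ i ∈ Finset.univ.erase k, d i * y i :=
    Finset.sum_le_sum fun i hi =>
      mul_le_mul_of_nonneg_right (hgap i (Finset.ne_of_mem_erase hi)) (hy i)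
  rw [← Finset.mul_sum, hrest] at hle
  rw [← Finset.add_sum_erase _ _ (Finset.mem_univ k)]
  linarith

section Frobenius

variable {m : ℕ}

theorem tinner_eq_trace (A B : Matrix (Fin m) (Fin m) ℝ) : tinner A B = (A * Bᵀ).trace := by
  simp [tinner, trace, mul_apply]

theorem tinner_comm (A B : Matrix (Fin m) (Fin m) ℝ) : tinner A B = tinner B A := by
  simp [tinner, mul_comm]

theorem tinner_sub_left (A B C : Matrix (Fin m) (Fin m) ℝ) :
    tinner (A - B) C = tinner A C - tinner B C := by
  simp [tinner, sub_mul, Finset.sum_sub_distrib]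

theorem tinner_sub_right (A B C : Matrix (Fin m) (Fin m) ℝ) :
    tinner A (B - C) = tinner A B - tinner A C := by
  simp [tinner, mul_sub, Finset.sum_sub_distrib]

theorem tinner_diagonal_left (d : Fin m → ℝ) (B : Matrix (Fin m) (Fin m) ℝ) :
    tinner (diagonal d) B = ∑ i, d i * B i i := by
  simp [tinner, diagonal_apply, ite_mul]

theorem tinner_mul_mul_transpose_left (U A B : Matrix (Fin m) (Fin m) ℝ) :
    tinner (U * A * Uᵀ) B = tinner A (Uᵀ * B * U) := by
  simp only [tinner_eq_trace, transpose_mul, transpose_transpose, Matrix.mul_assoc]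
  rw [trace_mul_comm U, Matrix.mul_assoc, Matrix.mul_assoc]

theorem frobSq_eq_tinner_self (A : Matrix (Fin m) (Fin m) ℝ) : frobSq A = tinner A A := by
  simp [frobSq, tinner, sq]

theorem frobSq_sub (A B : Matrix (Fin m) (Fin m) ℝ) :
    frobSq (A - B) = frobSq A - 2 * tinner A B + frobSq B := by
  simp only [frobSq_eq_tinner_self, tinner_sub_left, tinner_sub_right, tinner_comm B A]
  ring

theorem frobSq_nonpos_iff {A : Matrix (Fin m) (Fin m) ℝ} : frobSq A ≤ 0 ↔ A = 0 := by
  refine ⟨fun h => ?_, by rintro rfl; simp [frobSq]⟩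
  have hrows := (Finset.sum_eq_zero_iff_of_nonneg fun i _ => by positivity).1 <|
    le_antisymm h (by positivity)
  ext i j
  exact pow_eq_zero_iff two_ne_zero |>.1 <|
    (Finset.sum_eq_zero_iff_of_nonneg fun j _ => by positivity).1
      (hrows i (Finset.mem_univ i)) j (Finset.mem_univ j)

end Frobenius

theorem Matrix.PosSemidef.sq_apply_le_mul_apply {m : ℕ} {Y : Matrix (Fin m) (Fin m) ℝ}
    (hY : Y.PosSemidef) (i j : Fin m) : Y i j ^ 2 ≤ Y i i * Y j j := by
  have hsymm : Y j i = Y i j := by simpa using congrFun (congrFun hY.1 i) j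
  have hquad : ∀ t : ℝ, 0 ≤ Y j j * (t * t) + 2 * Y i j * t + Y i i := fun t => by
    have := hY.dotProduct_mulVec_nonneg (Pi.single i 1 + t • Pi.single j 1)
    simp only [star_trivial, mulVec_add, mulVec_smul, mulVec_single, dotProduct_add,
      add_dotProduct, smul_dotProduct, single_dotProduct, dotProduct_smul, smul_eq_mul, col_apply,
      MulOpposite.op_one, one_smul, one_mul, hsymm] at this
    linarith
  have hdisc := discrim_le_zero hquad
  rw [discrim] at hdisc
  nlinarith

section Spectrahedron

variable {m : ℕ} {X Y : Matrix (Fin m) (Fin m) ℝ}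

theorem sum_diag_of_mem_spectra (hX : X ∈ Spectra m) : ∑ i, X i i = 1 := hX.2

theorem convex_spectra : Convex ℝ (Spectra m) := by
  intro X hX Y hY a b ha hb hab
  refine ⟨(hX.1.smul ha).add (hY.1.smul hb), ?_⟩
  rw [trace_add, trace_smul, trace_smul, hX.2, hY.2, smul_eq_mul, smul_eq_mul, mul_one, mul_one,
    hab]

theorem transpose_mul_mul_mem_spectra (hX : X ∈ Spectra m) {U : Matrix (Fin m) (Fin m) ℝ}
    (hU : U * Uᵀ = 1) : Uᵀ * X * U ∈ Spectra m := by
  refine ⟨?_, ?_⟩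
  · simpa [conjTranspose_eq_transpose_of_trivial] using hX.1.conjTranspose_mul_mul_same U
  · rw [trace_mul_cycle, hU, Matrix.one_mul, hX.2]

theorem frobSq_le_one_of_mem_spectra (hX : X ∈ Spectra m) : frobSq X ≤ 1 :=
  calc frobSq X ≤ ∑ i, ∑ j, X i i * X j j :=
        Finset.sum_le_sum fun i _ => Finset.sum_le_sum fun j _ => hX.1.sq_apply_le_mul_apply i j
    _ = 1 := by rw [← Finset.sum_mul_sum, sum_diag_of_mem_spectra hX, one_mul]

theorem frobSq_sub_le_of_mem_spectra (hX : X ∈ Spectra m) (hY : Y ∈ Spectra m) :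
    frobSq (X - Y) ≤ 2 * (1 - tinner X Y) := by
  rw [frobSq_sub]
  linarith [frobSq_le_one_of_mem_spectra hX, frobSq_le_one_of_mem_spectra hY]

end Spectrahedron

theorem exists_eigenvalues_eq_sortedEigs_zero {m : ℕ} [NeZero m] {A : Matrix (Fin m) (Fin m) ℝ}
    (hA : A.IsHermitian) :
    ∃ k, hA.eigenvalues k = sortedEigs hA 0 ∧ ∀ i ≠ k, sortedEigs hA 1 ≤ hA.eigenvalues i := by
  let σ := Tuple.sort hA.eigenvalues
  refine ⟨σ 0, rfl, fun i hi => ?_⟩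
  have hpos : σ.symm i ≠ 0 := fun h => hi (by rw [← h, Equiv.apply_symm_apply])
  simpa [sortedEigs, σ, Equiv.apply_symm_apply]
    using Tuple.monotone_sort hA.eigenvalues (Fin.one_le_of_ne_zero hpos)

theorem Matrix.IsHermitian.exists_orthogonal_diagonalization {m : ℕ}
    {G : Matrix (Fin m) (Fin m) ℝ} (hG : G.IsHermitian) :
    ∃ U : Matrix (Fin m) (Fin m) ℝ,
      Uᵀ * U = 1 ∧ U * Uᵀ = 1 ∧ G = U * diagonal hG.eigenvalues * Uᵀ := by
  refine ⟨hG.eigenvectorUnitary, ?_, ?_, ?_⟩ <;>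
    simp only [← conjTranspose_eq_transpose_of_trivial, ← star_eq_conjTranspose]
  · exact mem_unitaryGroup_iff'.1 hG.eigenvectorUnitary.2
  · exact mem_unitaryGroup_iff.1 hG.eigenvectorUnitary.2
  · simpa [Function.comp_def] using hG.spectral_theorem

section Diagonalized

variable {m : ℕ} {G U : Matrix (Fin m) (Fin m) ℝ} {d : Fin m → ℝ}

theorem mul_diagonal_single_mul_transpose_mem_spectra (hU : Uᵀ * U = 1) (k : Fin m) :
    U * diagonal (Pi.single k 1) * Uᵀ ∈ Spectra m := by
  have hE : diagonal (Pi.single k (1 : ℝ)) ∈ Spectra m :=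
    ⟨PosSemidef.diagonal (Pi.single_nonneg.2 zero_le_one), by simp [trace_diagonal]⟩
  simpa using transpose_mul_mul_mem_spectra hE (U := Uᵀ) (by rwa [transpose_transpose])

theorem tinner_eq_sum_mul_diag (hGU : G = U * diagonal d * Uᵀ) (X : Matrix (Fin m) (Fin m) ℝ) :
    tinner G X = ∑ i, d i * (Uᵀ * X * U) i i := by
  rw [hGU, tinner_mul_mul_transpose_left, tinner_diagonal_left]

theorem tinner_mul_diagonal_single_mul_transpose (hU : Uᵀ * U = 1)
    (hGU : G = U * diagonal d * Uᵀ) (k : Fin m) :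
    tinner G (U * diagonal (Pi.single k 1) * Uᵀ) = d k := by
  rw [tinner_eq_sum_mul_diag hGU, ← Matrix.mul_assoc, ← Matrix.mul_assoc, hU, Matrix.one_mul,
    Matrix.mul_assoc, hU, Matrix.mul_one]
  simp [Pi.single_apply]

theorem add_mul_le_tinner_of_gap (hU : U * Uᵀ = 1) (hGU : G = U * diagonal d * Uᵀ) {k : Fin m}
    {δ : ℝ} (hgap : ∀ i ≠ k, d k + δ ≤ d i) {X : Matrix (Fin m) (Fin m) ℝ} (hX : X ∈ Spectra m) :
    d k + δ * (1 - tinner X (U * diagonal (Pi.single k 1) * Uᵀ)) ≤ tinner G X := by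
  have hY := transpose_mul_mul_mem_spectra hX hU
  have hXP : tinner X (U * diagonal (Pi.single k 1) * Uᵀ) = (Uᵀ * X * U) k k := by
    rw [tinner_comm, tinner_mul_mul_transpose_left, tinner_diagonal_left]
    simp [Pi.single_apply]
  rw [tinner_eq_sum_mul_diag hGU, hXP]
  exact add_mul_one_sub_le_sum_mul (fun i => hY.1.diag_nonneg) (sum_diag_of_mem_spectra hY) hgap

theorem eq_mul_diagonal_single_mul_transpose_of_tinner_le (hU : Uᵀ * U = 1) (hU' : U * Uᵀ = 1)
    (hGU : G = U * diagonal d * Uᵀ) {k : Fin m} {δ : ℝ} (hδ : 0 < δ)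
    (hgap : ∀ i ≠ k, d k + δ ≤ d i) {X : Matrix (Fin m) (Fin m) ℝ} (hX : X ∈ Spectra m)
    (hle : tinner G X ≤ d k) : X = U * diagonal (Pi.single k 1) * Uᵀ := by
  have hP := mul_diagonal_single_mul_transpose_mem_spectra hU k
  have hclose : 1 - tinner X (U * diagonal (Pi.single k 1) * Uᵀ) ≤ 0 := by
    by_contra! hpos
    nlinarith [add_mul_le_tinner_of_gap hU' hGU hgap hX]
  refine sub_eq_zero.1 (frobSq_nonpos_iff.1 ?_)
  linarith [frobSq_sub_le_of_mem_spectra hX hP]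

end Diagonalized

/-- Quadratic growth under the eigen-gap assumption:
`‖X − X*‖_F² ≤ (2/δ)(f(X) − f(X*))` for all `X` in the spectrahedron. -/
theorem stmt1 {n : ℕ} (f : Matrix (Fin (n+2)) (Fin (n+2)) ℝ → ℝ)
    (Gf : Matrix (Fin (n+2)) (Fin (n+2)) ℝ → Matrix (Fin (n+2)) (Fin (n+2)) ℝ)
    (hconv : ConvexOn ℝ Set.univ f)
    (hdiff : ∀ X H, HasDerivAt (fun t : ℝ => f (X + t • H)) (tinner (Gf X) H) 0)
    (Xs : Matrix (Fin (n+2)) (Fin (n+2)) ℝ) (hXs : Xs ∈ Spectra (n+2))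
    (hopt : ∀ X ∈ Spectra (n+2), f Xs ≤ f X)
    (hG : (Gf Xs).IsHermitian)
    (δ : ℝ) (hδ : δ = sortedEigs hG 1 - sortedEigs hG 0) (hδpos : 0 < δ) :
    ∀ X ∈ Spectra (n+2), frobSq (X - Xs) ≤ (2/δ) * (f X - f Xs) := by
  obtain ⟨U, hUU, hUU', hGU⟩ := hG.exists_orthogonal_diagonalization
  obtain ⟨k, hk0, hk1⟩ := exists_eigenvalues_eq_sortedEigs_zero hG
  have hgap : ∀ i ≠ k, hG.eigenvalues k + δ ≤ hG.eigenvalues i := fun i hi => by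
    linarith [hk1 i hi]
  set P := U * diagonal (Pi.single k 1) * Uᵀ
  have hP : P ∈ Spectra (n+2) := mul_diagonal_single_mul_transpose_mem_spectra hUU k
  have hGP : tinner (Gf Xs) P = hG.eigenvalues k :=
    tinner_mul_diagonal_single_mul_transpose hUU hGU k
  have hXs_eq : Xs = P := by
    have hfo := (isMinOn_iff.2 hopt).nonneg_of_hasDerivAt_line convex_spectra hXs hP
      (hdiff Xs (P - Xs))
    rw [tinner_sub_right, hGP] at hfo
    exact eq_mul_diagonal_single_mul_transpose_of_tinner_le hUU hUU' hGU hδpos hgap hXs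
      (by linarith)
  have hGXs : tinner (Gf Xs) Xs = hG.eigenvalues k := by rw [← hGP, ← hXs_eq]
  intro X hX
  have hgrad := hconv.le_sub_of_hasDerivAt_line (hdiff Xs (X - Xs))
  rw [tinner_sub_right, hGXs] at hgrad
  calc frobSq (X - Xs) ≤ 2 * (1 - tinner X P) := by
        rw [hXs_eq]
        exact frobSq_sub_le_of_mem_spectra hX hP
    _ = 2 / δ * (δ * (1 - tinner X P)) := by field_simp
    _ ≤ 2 / δ * (f X - f Xs) := by
      gcongr
      linarith [add_mul_le_tinner_of_gap hUU' hGU hgap hX]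
end
end
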